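/- arXiv:1805.03009 — 2 statements merged into one kernel-verified Lean document; each statement's English description precedes it below -/
import Mathlib

section
/- Let Ω have finite measure, q > 2, α > 0, u_a^ν ≤ u_b^ν in L²(Ω), and let F̃ : U → L^q(Ω)^N have components F̃^ν that are Newton differentiable with Newton derivative D_N F̃^ν and locally Lipschitz, with D_N F̃(u) uniformly bounded in operator norm for u in a neighborhood of ū. Define G(u) := u − P_{U_ad}(−α^{−1} F̃(u)) and, for u ∈ U, let χ_I(u) act componentwise as multiplication by the indicator of I^ν(u) := {u_a^ν < −α^{−1} F̃^ν(u) < u_b^ν}. Assume there exists c > 0 such that for all u ∈ U and all w ∈ U, ((Id + α^{−1} χ_I(u) D_N F̃(u) χ_I(u)) w, w)_U ≥ c‖w‖²_U. If ū satisfies G(ū) = 0, then there exists ε > 0 such that for every u₀ with ‖u₀ − ū‖_U ≤ ε the semi-smooth Newton iteration — u_{k+1} := u_k + δ_k where δ_k solves D_N G(u_k) δ_k = −G(u_k) with D_N G(u_k) = Id + α^{−1} χ_I(u_k) D_N F̃(u_k) — is well defined (each D_N G(u_k) is invertible with uniformly bounded inverse) and converges superlinearly to ū, i.e., ‖u_{k+1}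 − ū‖_U = o(‖u_k − ū‖_U) as k → ∞. -/
open MeasureTheory Filter Asymptotics Topology
open scoped RealInnerProductSpace ENNReal NNReal

noncomputable section

/-- `L²(Ω)` for a subset `Ω ⊆ ℝⁿ`. -/
abbrev L2Sp {n : ℕ} (Ω : Set (EuclideanSpace ℝ (Fin n))) :=
  Lp ℝ 2 (volume.restrict Ω)

/-- `U = L²(Ω)^N` with the Hilbert product structure. -/
abbrev USp {n : ℕ} (N : ℕ) (Ω : Set (EuclideanSpace ℝ (Fin n))) :=
  PiLp 2 fun _ : Fin N => L2Sp Ω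

/-- `L^q(Ω)^N`. -/
abbrev UqSp {n : ℕ} (N : ℕ) (q : ℝ≥0∞) (Ω : Set (EuclideanSpace ℝ (Fin n))) :=
  PiLp 2 fun _ : Fin N => Lp ℝ q (volume.restrict Ω)

section AuxLemmas

theorem residA (a b y z : ℝ) (hab : a ≤ b)
    (hr : max a (min (y + z) b) - max a (min y b)
        - (if a < y + z ∧ y + z < b then z else 0) ≠ 0) :
    0 < (if y = a ∨ y = b then b - a else min |y - a| |y - b|)
    ∧ (if y = a ∨ y = b then b - a else min |y - a| |y - b|) ≤ |z|
    ∧ |max a (min (y + z) b) - max a (min y b)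
        - (if a < y + z ∧ y + z < b then z else 0)| ≤ |z| := by
  rcases le_or_gt (y + z) a with hza | hza
  · -- y + z ≤ a : M1 = a, indicator off
    have hif : ¬(a < y + z ∧ y + z < b) := by rintro ⟨h1, _⟩; linarith
    rw [if_neg hif] at hr ⊢
    have hM1 : max a (min (y + z) b) = a := by
      rw [min_eq_left (by linarith), max_eq_left (by linarith)]
    rw [hM1, sub_zero] at hr ⊢
    have hay : a < y := by
      by_contra hya
      push_neg at hya
      rw [min_eq_left (by linarith), max_eq_left hya, sub_self] at hr
      exact hr rfl
    have hz' : y - a ≤ |z| := by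
      rw [abs_of_nonpos (by linarith)]; linarith
    rcases lt_or_ge y b with hyb | hby
    · -- a < y < b
      have hM0 : max a (min y b) = y := by
        rw [min_eq_left hyb.le, max_eq_right hay.le]
      rw [hM0] at hr ⊢
      rw [if_neg (by push_neg; exact ⟨hay.ne', hyb.ne⟩)]
      refine ⟨lt_min (by rw [abs_of_pos (by linarith)]; linarith)
        (by rw [abs_of_neg (by linarith)]; linarith), ?_, ?_⟩
      · exact le_trans (min_le_left _ _) (by rw [abs_of_pos (by linarith)]; exact hz')
      · rw [abs_of_nonpos (by linarith)]; linarith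
    · -- b ≤ y
      have hM0 : max a (min y b) = b := by
        rw [min_eq_right hby, max_eq_right hab]
      rw [hM0] at hr ⊢
      have hblta : a < b := by
        rcases lt_or_eq_of_le hab with h | h
        · exact h
        · exfalso; rw [← h, sub_self] at hr; exact hr rfl
      rcases eq_or_lt_of_le hby with hyb | hyb
      · rw [if_pos (Or.inr hyb.symm)]
        refine ⟨by linarith, by linarith, ?_⟩
        rw [abs_of_neg (by linarith)]; linarith
      · rw [if_neg (by push_neg; constructor <;> intro h <;> linarith)]
        refine ⟨lt_min (by rw [abs_of_pos (by linarith)]; linarith)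
          (by rw [abs_of_pos (by linarith)]; linarith), ?_, ?_⟩
        · exact le_trans (min_le_left _ _) (by rw [abs_of_pos (by linarith)]; exact hz')
        · rw [abs_of_neg (by linarith)]; linarith
  · rcases le_or_gt b (y + z) with hzb | hzb
    · -- b ≤ y + z : M1 = b
      have hif : ¬(a < y + z ∧ y + z < b) := by rintro ⟨_, h2⟩; linarith
      rw [if_neg hif] at hr ⊢
      have hM1 : max a (min (y + z) b) = b := by
        rw [min_eq_right hzb, max_eq_right hab]
      rw [hM1, sub_zero] at hr ⊢
      have hyb : y < b := by
        by_contra hby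
        push_neg at hby
        rw [min_eq_right hby, max_eq_right hab, sub_self] at hr
        exact hr rfl
      have hz' : b - y ≤ |z| := by
        rw [abs_of_nonneg (by linarith)]; linarith
      rcases lt_or_ge a y with hay | hya
      · -- a < y < b
        have hM0 : max a (min y b) = y := by
          rw [min_eq_left hyb.le, max_eq_right hay.le]
        rw [hM0] at hr ⊢
        rw [if_neg (by push_neg; exact ⟨hay.ne', hyb.ne⟩)]
        refine ⟨lt_min (by rw [abs_of_pos (by linarith)]; linarith)
          (by rw [abs_of_neg (by linarith)]; linarith), ?_, ?_⟩
        · exact le_trans (min_le_right _ _) (by rw [abs_of_neg (by linarith)]; linarith)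
        · rw [abs_of_nonneg (by linarith)]; linarith
      · -- y ≤ a
        have hM0 : max a (min y b) = a := by
          rw [min_eq_left (by linarith), max_eq_left (by linarith)]
        rw [hM0] at hr ⊢
        have hblta : a < b := by
          rcases lt_or_eq_of_le hab with h | h
          · exact h
          · exfalso; rw [← h, sub_self] at hr; exact hr rfl
        rcases eq_or_lt_of_le hya with hya' | hya'
        · rw [if_pos (Or.inl hya')]
          refine ⟨by linarith, by linarith, ?_⟩
          rw [abs_of_pos (by linarith)]; linarith
        · rw [if_neg (by push_neg; constructor <;> intro h <;> linarith)]
          refine ⟨lt_min (by rw [abs_of_neg (by linarith)]; linarith)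
            (by rw [abs_of_neg (by linarith)]; linarith), ?_, ?_⟩
          · refine le_trans (min_le_left _ _) ?_
            rw [abs_of_neg (by linarith)]
            rw [abs_of_nonneg (by linarith)]; linarith
          · rw [abs_of_pos (by linarith)]; linarith
    · -- a < y + z < b : M1 = y + z, indicator on
      have hif : a < y + z ∧ y + z < b := ⟨hza, hzb⟩
      rw [if_pos hif] at hr ⊢
      have hM1 : max a (min (y + z) b) = y + z := by
        rw [min_eq_left hzb.le, max_eq_right hza.le]
      rw [hM1] at hr ⊢
      have hnotin : ¬ (a ≤ y ∧ y ≤ b) := by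
        rintro ⟨h1, h2⟩
        rw [min_eq_left h2, max_eq_right h1] at hr
        simp at hr
      rcases lt_or_ge y a with hya | hay
      · have hM0 : max a (min y b) = a := by
          rw [min_eq_left (by linarith), max_eq_left (by linarith)]
        rw [hM0] at hr ⊢
        rw [if_neg (by push_neg; constructor <;> intro h <;> linarith)]
        have hz' : a - y < |z| := by rw [abs_of_pos (by linarith)]; linarith
        refine ⟨lt_min (by rw [abs_of_neg (by linarith)]; linarith)
          (by rw [abs_of_neg (by linarith)]; linarith), ?_, ?_⟩
        · refine le_trans (min_le_left _ _) ?_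
          rw [abs_of_neg (by linarith)]; linarith
        · rw [abs_of_neg (by linarith)]
          rw [abs_of_pos (by linarith)] at hz' ⊢
          linarith
      · have hyb : b < y := by
          rcases le_or_gt y b with h | h
          · exact absurd ⟨hay, h⟩ hnotin
          · exact h
        have hM0 : max a (min y b) = b := by rw [min_eq_right hyb.le, max_eq_right hab]
        rw [hM0] at hr ⊢
        rw [if_neg (by push_neg; constructor <;> intro h <;> linarith)]
        have hz' : y - b < |z| := by rw [abs_of_neg (by linarith)]; linarith
        refine ⟨lt_min (by rw [abs_of_pos (by linarith)]; linarith)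
          (by rw [abs_of_pos (by linarith)]; linarith), ?_, ?_⟩
        · refine le_trans (min_le_right _ _) ?_
          rw [abs_of_pos (by linarith)]; linarith
        · rw [abs_of_pos (by linarith)]
          rw [abs_of_neg (by linarith)] at hz' ⊢
          linarith

theorem lemC {Z : Type*} [MeasurableSpace Z] (μ : Measure Z) [IsFiniteMeasure μ]
    (q : ℝ≥0∞) (hq : 2 < q)
    (a b y : Z → ℝ) (ha : Measurable a) (hb : Measurable b) (hy : Measurable y)
    (hab : ∀ᵐ x ∂μ, a x ≤ b x) {ε : ℝ} (hε : 0 < ε) :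
    ∃ δ > (0:ℝ), ∀ z : Z → ℝ, Measurable z →
      eLpNorm z q μ ≤ ENNReal.ofReal δ →
      eLpNorm (fun x => max (a x) (min (y x + z x) (b x)) - max (a x) (min (y x) (b x))
        - (if a x < y x + z x ∧ y x + z x < b x then z x else 0)) 2 μ
        ≤ ENNReal.ofReal ε * eLpNorm z q μ := by
  have hq0 : q ≠ 0 := by positivity
  set e : ℝ := 1/2 - 1/q.toReal with he_def
  have he : 0 < e := by
    rw [he_def]
    rcases eq_or_ne q ⊤ with hqt | hqt
    · simp [hqt]
    · have h2 : (2:ℝ) < q.toReal := by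
        rw [← ENNReal.toReal_ofNat]
        exact ENNReal.toReal_strict_mono hqt hq
      have : 1/q.toReal < 1/2 := by
        apply one_div_lt_one_div_of_lt <;> linarith
      linarith
  set h : Z → ℝ := fun x =>
    if y x = a x ∨ y x = b x then b x - a x else min |y x - a x| |y x - b x| with hh_def
  have hhm : Measurable h := by
    apply Measurable.ite
    · have h1 : MeasurableSet {x | y x - a x = 0} := (hy.sub ha) (measurableSet_singleton 0)
      have h2 : MeasurableSet {x | y x - b x = 0} := (hy.sub hb) (measurableSet_singleton 0)
      have : {x | y x = a x ∨ y x = b x} = {x | y x - a x = 0} ∪ {x | y x - b x = 0} := by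
        ext x; simp [sub_eq_zero]
      rw [this]; exact h1.union h2
    · exact hb.sub ha
    · exact ((hy.sub ha).abs).min ((hy.sub hb).abs)
  set θ : ℝ≥0∞ := ENNReal.ofReal ε ^ (1/e) / 2 with hθ_def
  have hrne : ENNReal.ofReal ε ^ (1/e) ≠ 0 :=
    (ENNReal.rpow_pos (ENNReal.ofReal_pos.2 hε) ENNReal.ofReal_ne_top).ne'
  have hθ0 : θ ≠ 0 := by
    rw [hθ_def]
    intro hcon
    rw [ENNReal.div_eq_zero_iff] at hcon
    rcases hcon with hcon | hcon
    · exact hrne hcon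
    · exact ENNReal.ofNat_ne_top hcon
  have hθtop : θ ≠ ⊤ := by
    rw [hθ_def]
    exact (ENNReal.div_lt_top (ENNReal.rpow_ne_top_of_nonneg (by positivity)
      ENNReal.ofReal_ne_top) (by norm_num)).ne
  have hkey : (θ + θ) ^ e ≤ ENNReal.ofReal ε := by
    rw [hθ_def, ENNReal.add_halves, ← ENNReal.rpow_mul, one_div, inv_mul_cancel₀ he.ne',
      ENNReal.rpow_one]
  have hset : ∀ m : ℕ, MeasurableSet {x | 0 < h x ∧ h x ≤ ((m:ℝ)+1)⁻¹} := by
    intro m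
    exact (measurableSet_lt measurable_const hhm).inter (measurableSet_le hhm measurable_const)
  have hanti : Antitone (fun m : ℕ => {x | 0 < h x ∧ h x ≤ ((m:ℝ)+1)⁻¹}) := by
    intro m m' hmm' x hx
    refine ⟨hx.1, hx.2.trans ?_⟩
    apply inv_anti₀ (by positivity)
    have : (m:ℝ) ≤ m' := Nat.cast_le.2 hmm'
    linarith
  have hiInter : ⋂ m : ℕ, {x | 0 < h x ∧ h x ≤ ((m:ℝ)+1)⁻¹} = ∅ := by
    ext x
    simp only [Set.mem_iInter, Set.mem_setOf_eq, Set.mem_empty_iff_false, iff_false, not_forall]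
    by_contra hcon
    push_neg at hcon
    obtain ⟨m, hm⟩ := exists_nat_gt (1/(h x))
    have h1 := (hcon m).1
    have h2 := (hcon m).2
    have e1 : 1 < (m:ℝ) * h x := by rwa [div_lt_iff₀ h1] at hm
    have e2 : h x * ((m:ℝ)+1) ≤ 1 := by
      rw [inv_eq_one_div, le_div_iff₀ (by positivity)] at h2
      linarith
    nlinarith
  have htends : Tendsto (fun m : ℕ => μ {x | 0 < h x ∧ h x ≤ ((m:ℝ)+1)⁻¹}) atTop (𝓝 0) := by
    have := tendsto_measure_iInter_atTop (μ := μ)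
      (fun m => (hset m).nullMeasurableSet) hanti ⟨0, measure_ne_top μ _⟩
    rw [hiInter, measure_empty] at this
    exact this
  obtain ⟨m, hm⟩ : ∃ m : ℕ, μ {x | 0 < h x ∧ h x ≤ ((m:ℝ)+1)⁻¹} ≤ θ := by
    exact (htends.eventually_le_const (pos_iff_ne_zero.2 hθ0)).exists
  set t : ℝ := ((m:ℝ)+1)⁻¹ with ht_def
  have ht : 0 < t := by positivity
  have hcheb : ∃ δ > (0:ℝ), ∀ z : Z → ℝ, AEStronglyMeasurable z μ →
      eLpNorm z q μ ≤ ENNReal.ofReal δ → μ {x | ENNReal.ofReal t ≤ (‖z x‖₊ : ℝ≥0∞)} ≤ θ := by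
    rcases eq_or_ne q ⊤ with hqt | hqt
    · refine ⟨t/2, by positivity, fun z hz hzle => ?_⟩
      have hae : ∀ᵐ x ∂μ, (‖z x‖₊ : ℝ≥0∞) ≤ eLpNormEssSup z μ := enorm_ae_le_eLpNormEssSup z μ
      have hnull : μ {x | ¬ ((‖z x‖₊ : ℝ≥0∞) ≤ eLpNormEssSup z μ)} = 0 := by
        simpa [ae_iff] using hae
      refine le_trans (le_of_eq (measure_mono_null ?_ hnull)) zero_le
      intro x hx
      simp only [Set.mem_setOf_eq] at hx ⊢
      intro hle
      have h1 : eLpNormEssSup z μ ≤ ENNReal.ofReal (t/2) := by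
        rw [hqt] at hzle; simpa [eLpNorm_exponent_top] using hzle
      have h2 : ENNReal.ofReal (t/2) < ENNReal.ofReal t := by
        apply (ENNReal.ofReal_lt_ofReal_iff_of_nonneg (by positivity)).2
        linarith
      exact absurd (hx.trans (hle.trans h1)) (not_le.2 h2)
    · have hqr : 0 < q.toReal := ENNReal.toReal_pos hq0 hqt
      have hθt : 0 < θ.toReal := ENNReal.toReal_pos hθ0 hθtop
      set β : ℝ := min 1 (θ.toReal ^ (q.toReal)⁻¹) with hβ_def
      have hβ0 : 0 < β := lt_min one_pos (Real.rpow_pos_of_pos hθt _)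
      refine ⟨t * β, mul_pos ht hβ0, fun z hz hzle => ?_⟩
      have hcb := meas_ge_le_mul_pow_eLpNorm_enorm μ hq0 hqt hz
        (ε := ENNReal.ofReal t) (ENNReal.ofReal_pos.2 ht).ne' (fun h => absurd h ENNReal.ofReal_ne_top)
      refine hcb.trans ?_
      calc (ENNReal.ofReal t)⁻¹ ^ q.toReal * eLpNorm z q μ ^ q.toReal
          ≤ (ENNReal.ofReal t)⁻¹ ^ q.toReal * ENNReal.ofReal (t*β) ^ q.toReal :=
            mul_le_mul_right (ENNReal.rpow_le_rpow hzle hqr.le) _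
        _ = ((ENNReal.ofReal t)⁻¹ * ENNReal.ofReal (t*β)) ^ q.toReal := by
            rw [ENNReal.mul_rpow_of_nonneg _ _ hqr.le]
        _ = (ENNReal.ofReal β) ^ q.toReal := by
            rw [ENNReal.ofReal_mul ht.le, ← mul_assoc,
              ENNReal.inv_mul_cancel (ENNReal.ofReal_pos.2 ht).ne' ENNReal.ofReal_ne_top, one_mul]
        _ ≤ (ENNReal.ofReal (θ.toReal ^ (q.toReal)⁻¹)) ^ q.toReal :=
            ENNReal.rpow_le_rpow (ENNReal.ofReal_le_ofReal (min_le_right _ _)) hqr.le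
        _ = θ := by
            rw [ENNReal.ofReal_rpow_of_pos (Real.rpow_pos_of_pos hθt _),
              ← Real.rpow_mul hθt.le, inv_mul_cancel₀ hqr.ne', Real.rpow_one,
              ENNReal.ofReal_toReal hθtop]
  obtain ⟨δ, hδ0, hδ⟩ := hcheb
  refine ⟨δ, hδ0, fun z hzm hzle => ?_⟩
  set A₁ : Set Z := {x | 0 < h x ∧ h x ≤ t} with hA₁_def
  set A₂ : Set Z := {x | ENNReal.ofReal t ≤ (‖z x‖₊ : ℝ≥0∞)} with hA₂_def
  have hA₂m : MeasurableSet A₂ := by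
    apply measurableSet_le measurable_const
    exact (measurable_coe_nnreal_ennreal.comp hzm.nnnorm)
  have hAm : MeasurableSet (A₁ ∪ A₂) := (hset m).union hA₂m
  have step1 : eLpNorm (fun x => max (a x) (min (y x + z x) (b x)) - max (a x) (min (y x) (b x))
        - (if a x < y x + z x ∧ y x + z x < b x then z x else 0)) 2 μ
      ≤ eLpNorm ((A₁ ∪ A₂).indicator z) 2 μ := by
    apply eLpNorm_mono_ae
    filter_upwards [hab] with x hx
    by_cases hTx : max (a x) (min (y x + z x) (b x)) - max (a x) (min (y x) (b x))
        - (if a x < y x + z x ∧ y x + z x < b x then z x else 0) = 0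
    · rw [hTx]; simp
    · obtain ⟨h1, h2, h3⟩ := residA (a x) (b x) (y x) (z x) hx hTx
      have hxA : x ∈ A₁ ∪ A₂ := by
        rcases le_or_gt (h x) t with hle | hlt
        · exact Or.inl ⟨h1, hle⟩
        · refine Or.inr ?_
          show ENNReal.ofReal t ≤ (‖z x‖₊ : ℝ≥0∞)
          rw [show ((‖z x‖₊ : ℝ≥0∞)) = ‖z x‖ₑ from rfl, Real.enorm_eq_ofReal_abs]
          exact ENNReal.ofReal_le_ofReal (le_trans hlt.le h2)
      rw [Set.indicator_of_mem hxA]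
      simpa [Real.norm_eq_abs] using h3
  have step2 : eLpNorm ((A₁ ∪ A₂).indicator z) 2 μ
      ≤ eLpNorm z q μ * (θ + θ) ^ e := by
    rw [eLpNorm_indicator_eq_eLpNorm_restrict hAm]
    have step3 := eLpNorm_le_eLpNorm_mul_rpow_measure_univ (μ := μ.restrict (A₁ ∪ A₂))
      (p := 2) (q := q) hq.le hzm.aestronglyMeasurable
    refine step3.trans ?_
    have hexp : 1/(2:ℝ≥0∞).toReal - 1/q.toReal = e := by rw [he_def]; norm_num
    rw [hexp, Measure.restrict_apply_univ]
    exact mul_le_mul' (eLpNorm_mono_measure _ Measure.restrict_le_self)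
      (ENNReal.rpow_le_rpow ((measure_union_le _ _).trans
        (add_le_add hm (hδ z hzm.aestronglyMeasurable hzle))) he.le)
  refine (step1.trans step2).trans ?_
  rw [mul_comm]
  exact mul_le_mul_left hkey _

variable {H : Type*} [NormedAddCommGroup H] [InnerProductSpace ℝ H] [CompleteSpace H]

theorem surj_of_coercive (T : H →L[ℝ] H) (c : ℝ) (hc : 0 < c)
    (hco : ∀ w, c * ‖w‖^2 ≤ (inner ℝ (T w) w : ℝ)) : Function.Surjective T := by
  have hB : IsCoercive ((innerSL ℝ).comp T) := by
    refine ⟨c, hc, fun w => ?_⟩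
    simpa [pow_two, mul_assoc] using hco w
  intro f
  refine ⟨hB.continuousLinearEquivOfBilin.symm f, ?_⟩
  have h3 : ∀ w, (inner ℝ (T (hB.continuousLinearEquivOfBilin.symm f)) w : ℝ) = inner ℝ f w := by
    intro w
    have h1 := hB.continuousLinearEquivOfBilin_apply (hB.continuousLinearEquivOfBilin.symm f) w
    simp only [ContinuousLinearMap.comp_apply, innerSL_apply_apply] at h1
    rw [← h1, hB.continuousLinearEquivOfBilin.apply_symm_apply f]
  exact ext_inner_right ℝ (fun w => h3 w)

theorem lemC' {Z : Type*} [MeasurableSpace Z] (μ : Measure Z) [IsFiniteMeasure μ]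
    (q : ℝ≥0∞) (hq : 2 < q)
    (a b Y1 : Z → ℝ) (ha : Measurable a) (hb : Measurable b) (hY1 : Measurable Y1)
    (hab : ∀ᵐ x ∂μ, a x ≤ b x) {ε : ℝ} (hε : 0 < ε) :
    ∃ δ > (0:ℝ), ∀ Y2 : Z → ℝ, Measurable Y2 →
      eLpNorm (fun x => Y2 x - Y1 x) q μ ≤ ENNReal.ofReal δ →
      eLpNorm (fun x => max (a x) (min (Y2 x) (b x)) - max (a x) (min (Y1 x) (b x))
        - (if a x < Y2 x ∧ Y2 x < b x then Y2 x - Y1 x else 0)) 2 μ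
        ≤ ENNReal.ofReal ε * eLpNorm (fun x => Y2 x - Y1 x) q μ := by
  obtain ⟨δ, hδ0, hδ⟩ := lemC μ q hq a b Y1 ha hb hY1 hab hε
  refine ⟨δ, hδ0, fun Y2 hY2 hle => ?_⟩
  have h := hδ (fun x => Y2 x - Y1 x) (hY2.sub hY1) hle
  have hrw : ∀ x : Z, Y1 x + (Y2 x - Y1 x) = Y2 x := fun x => by ring
  simpa only [hrw] using h

theorem sqrt_sum_le_sum {N : ℕ} (f : Fin N → ℝ) (hf : ∀ i, 0 ≤ f i) :
    Real.sqrt (∑ i, f i ^ 2) ≤ ∑ i, f i := by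
  rw [show ∑ i, f i = Real.sqrt ((∑ i, f i)^2) from
    (Real.sqrt_sq (Finset.sum_nonneg fun i _ => hf i)).symm]
  exact Real.sqrt_le_sqrt (Finset.sum_sq_le_sq_sum_of_nonneg (fun i _ => hf i))

theorem pilp_norm_le_sum {N : ℕ} {β : Fin N → Type*} [∀ i, NormedAddCommGroup (β i)]
    (x : PiLp 2 β) : ‖x‖ ≤ ∑ i, ‖x i‖ := by
  rw [PiLp.norm_eq_of_L2]
  exact sqrt_sum_le_sum _ (fun i => norm_nonneg _)

theorem pilp_comp_le {N : ℕ} {β : Fin N → Type*} [∀ i, NormedAddCommGroup (β i)]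
    (x : PiLp 2 β) (i : Fin N) : ‖x i‖ ≤ ‖x‖ := by
  rw [PiLp.norm_eq_of_L2, show ‖x i‖ = Real.sqrt (‖x i‖^2) from (Real.sqrt_sq (norm_nonneg _)).symm]
  apply Real.sqrt_le_sqrt
  exact Finset.single_le_sum (f := fun j => ‖x j‖^2) (fun j _ => sq_nonneg _) (Finset.mem_univ i)

theorem pilp_norm_le_mul {N : ℕ} {β γ : Fin N → Type*} [∀ i, NormedAddCommGroup (β i)]
    [∀ i, NormedAddCommGroup (γ i)] (x : PiLp 2 β) (y : PiLp 2 γ) (Cc : ℝ) (hC : 0 ≤ Cc)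
    (hcomp : ∀ i, ‖x i‖ ≤ Cc * ‖y i‖) : ‖x‖ ≤ Cc * ‖y‖ := by
  rw [PiLp.norm_eq_of_L2, PiLp.norm_eq_of_L2]
  have h1 : Cc * Real.sqrt (∑ i, ‖y i‖^2) = Real.sqrt (Cc^2 * ∑ i, ‖y i‖^2) := by
    rw [Real.sqrt_mul (sq_nonneg Cc), Real.sqrt_sq hC]
  rw [h1]
  apply Real.sqrt_le_sqrt
  rw [Finset.mul_sum]
  apply Finset.sum_le_sum
  intro i _
  calc ‖x i‖^2 ≤ (Cc * ‖y i‖)^2 := by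
        apply pow_le_pow_left₀ (norm_nonneg _) (hcomp i)
    _ = Cc^2 * ‖y i‖^2 := by ring

theorem fin_min {N : ℕ} (δ : Fin N → ℝ) (hδ : ∀ ν, 0 < δ ν) : ∃ d > (0:ℝ), ∀ ν, d ≤ δ ν := by
  by_cases hN : Nonempty (Fin N)
  · obtain ⟨ν₀, -, hmin⟩ := Finset.exists_min_image Finset.univ δ
      ⟨Classical.arbitrary _, Finset.mem_univ _⟩
    exact ⟨δ ν₀, hδ ν₀, fun ν => hmin ν (Finset.mem_univ ν)⟩
  · exact ⟨1, one_pos, fun ν => (hN ⟨ν⟩).elim⟩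

theorem ofReal_norm_lp {Z : Type*} [MeasurableSpace Z] {μ : Measure Z} {p : ℝ≥0∞}
    [Fact (1 ≤ p)] (f : Lp ℝ p μ) : eLpNorm (⇑f) p μ = ENNReal.ofReal ‖f‖ := by
  rw [Lp.norm_def, ENNReal.ofReal_toReal (Lp.eLpNorm_ne_top f)]

end AuxLemmas


set_option maxHeartbeats 12000000 in
set_option synthInstance.maxHeartbeats 1000000 in
/-- (Superlinear convergence of the semismooth Newton method.)
Under Newton differentiability, local Lipschitz continuity and local boundedness of
`D_N F̃`, together with the uniform coercivity of
`w ↦ ((Id + α⁻¹ χ_I(u) D_N F̃(u) χ_I(u)) w, w)_U`, the semismooth Newton iteration for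
`G(u) = u − P_{U_ad}(−α⁻¹ F̃(u))` started close enough to a root `ū` of `G` is well defined
(each `D_N G(u_k) = Id + α⁻¹ χ_I(u_k) D_N F̃(u_k)` is invertible with uniformly bounded
inverse) and converges superlinearly to `ū`. -/
theorem stmt14 {n N : ℕ} (Ω : Set (EuclideanSpace ℝ (Fin n)))
    (hΩbd : Bornology.IsBounded Ω)
    (q : ℝ≥0∞) [Fact (1 ≤ q)] (hq : 2 < q)
    (α : ℝ) (hα : 0 < α)
    (ua ub : Fin N → L2Sp Ω)
    (hab : ∀ ν, ∀ᵐ x ∂(volume.restrict Ω), ua ν x ≤ ub ν x)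
    (Ft : USp N Ω → UqSp N q Ω)
    (DF : USp N Ω → (USp N Ω →L[ℝ] UqSp N q Ω))
    -- `F̃` is Newton differentiable with Newton derivative `D_N F̃`
    (hNF : ∀ u : USp N Ω,
      (fun v => Ft (u + v) - Ft u - DF (u + v) v) =o[𝓝 0] fun v : USp N Ω => v)
    -- `F̃` is locally Lipschitz
    (hLip : LocallyLipschitz Ft)
    -- `P` is the componentwise pointwise projection onto `U_ad`
    (P : UqSp N q Ω → USp N Ω)
    (hP : ∀ u ν, ⇑(P u ν) =ᵐ[volume.restrict Ω]
      fun x => max (ua ν x) (min (u ν x) (ub ν x)))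
    (G : USp N Ω → USp N Ω)
    (hG : ∀ u, G u = u - P (-(α⁻¹) • Ft u))
    -- `X u` is componentwise multiplication by the indicator of
    -- `I^ν(u) = {u_a^ν < −α⁻¹ F̃^ν(u) < u_b^ν}`, i.e. the operator `χ_I(u)`
    (X : USp N Ω → (USp N Ω →L[ℝ] USp N Ω))
    (hX : ∀ u w ν, ⇑(X u w ν) =ᵐ[volume.restrict Ω]
      ({x | ua ν x < -α⁻¹ * (Ft u ν) x ∧ -α⁻¹ * (Ft u ν) x < ub ν x}).indicator ⇑(w ν))
    -- `E u = χ_I(u)·D_N F̃(u)`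
    (E : USp N Ω → (USp N Ω →L[ℝ] USp N Ω))
    (hE : ∀ u h ν, ⇑(E u h ν) =ᵐ[volume.restrict Ω]
      ({x | ua ν x < -α⁻¹ * (Ft u ν) x ∧ -α⁻¹ * (Ft u ν) x < ub ν x}).indicator
        ⇑(DF u h ν))
    (ubar : USp N Ω) (hroot : G ubar = 0)
    -- `D_N F̃` is uniformly bounded near `ū`
    (hDFbd : ∃ δ > (0 : ℝ), ∃ K : ℝ, ∀ u, ‖u - ubar‖ ≤ δ → ‖DF u‖ ≤ K)
    -- uniform coercivity of `w ↦ ((Id + α⁻¹ χ_I(u) D_N F̃(u) χ_I(u)) w, w)_U`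
    (c : ℝ) (hc : 0 < c)
    (hcoer : ∀ (u : USp N Ω) (w : USp N Ω),
      c * ‖w‖ ^ 2 ≤ ⟪w + α⁻¹ • E u (X u w), w⟫) :
    ∃ ε > (0 : ℝ), ∃ C : ℝ, ∀ u0 : USp N Ω, ‖u0 - ubar‖ ≤ ε →
      ∃ useq : ℕ → USp N Ω, useq 0 = u0 ∧
        (∀ k : ℕ,
          Function.Bijective (fun w : USp N Ω => w + α⁻¹ • E (useq k) w) ∧
          (∀ w : USp N Ω, ‖w‖ ≤ C * ‖w + α⁻¹ • E (useq k) w‖) ∧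
          (useq (k + 1) - useq k) + α⁻¹ • E (useq k) (useq (k + 1) - useq k)
            = -G (useq k)) ∧
        Tendsto useq atTop (𝓝 ubar) ∧
        (fun k => ‖useq (k + 1) - ubar‖) =o[atTop] fun k => ‖useq k - ubar‖ := by

  classical
  set μ : Measure (EuclideanSpace ℝ (Fin n)) := volume.restrict Ω with hμdef
  haveI hfin : IsFiniteMeasure μ := by
    constructor
    rw [hμdef, Measure.restrict_apply_univ]
    exact hΩbd.measure_lt_top
  haveI hCS : CompleteSpace (USp N Ω) := by
    have : CompleteSpace (∀ _ : Fin N, L2Sp Ω) := inferInstance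
    exact inferInstance
  obtain ⟨δ₀, hδ₀0, K, hK⟩ := hDFbd
  have hK0 : 0 ≤ K := le_trans (norm_nonneg _) (hK ubar (by simp [hδ₀0.le]))
  -- the comparison constant between L^q and L^2 norms
  set cqE : ℝ≥0∞ := μ Set.univ ^ (1/(2:ℝ≥0∞).toReal - 1/q.toReal) with hcqE_def
  have hexp_pos : (0:ℝ) < 1/(2:ℝ≥0∞).toReal - 1/q.toReal := by
    rcases eq_or_ne q ⊤ with hqt | hqt
    · simp [hqt]
    · have h2 : (2:ℝ) < q.toReal := by
        rw [← ENNReal.toReal_ofNat]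
        exact ENNReal.toReal_strict_mono hqt hq
      have : 1/q.toReal < 1/2 := by
        apply one_div_lt_one_div_of_lt <;> linarith
      simp only [ENNReal.toReal_ofNat]
      linarith
  have hcqE_ne_top : cqE ≠ ⊤ := by
    rw [hcqE_def]
    exact ENNReal.rpow_ne_top_of_nonneg hexp_pos.le (measure_ne_top μ _)
  set Cq : ℝ := cqE.toReal with hCq_def
  have hCq0 : 0 ≤ Cq := ENNReal.toReal_nonneg
  -- L² vs L^q comparison for single functions
  have hcomp2q : ∀ f : EuclideanSpace ℝ (Fin n) → ℝ, AEStronglyMeasurable f μ →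
      eLpNorm f 2 μ ≤ eLpNorm f q μ * cqE := fun f hf =>
    eLpNorm_le_eLpNorm_mul_rpow_measure_univ hq.le hf
  -- extensionality for U
  have ext_USp : ∀ v w : USp N Ω, (∀ ν, ⇑(v ν) =ᵐ[μ] ⇑(w ν)) → v = w :=
    fun v w h => WithLp.ofLp_injective 2 (funext fun ν => Lp.ext (h ν))
  -- the indicator sets
  set S : USp N Ω → Fin N → Set (EuclideanSpace ℝ (Fin n)) := fun u ν =>
    {x | ua ν x < -α⁻¹ * (Ft u ν) x ∧ -α⁻¹ * (Ft u ν) x < ub ν x} with hS_def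
  have hX' : ∀ u w ν, ⇑(X u w ν) =ᵐ[μ] (S u ν).indicator ⇑(w ν) := hX
  have hE' : ∀ u h ν, ⇑(E u h ν) =ᵐ[μ] (S u ν).indicator ⇑(DF u h ν) := hE
  -- idempotence identities
  have idXX : ∀ u w, X u (X u w) = X u w := by
    intro u w
    apply ext_USp
    intro ν
    refine (hX' u (X u w) ν).trans ?_
    refine .trans ?_ (hX' u w ν).symm
    filter_upwards [hX' u w ν] with x hx
    by_cases hm : x ∈ S u ν
    · rw [Set.indicator_of_mem hm, Set.indicator_of_mem hm, hx, Set.indicator_of_mem hm]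
    · rw [Set.indicator_of_notMem hm, Set.indicator_of_notMem hm]
  have idXE : ∀ u h, X u (E u h) = E u h := by
    intro u h
    apply ext_USp
    intro ν
    refine (hX' u (E u h) ν).trans ?_
    refine .trans ?_ (hE' u h ν).symm
    filter_upwards [hE' u h ν] with x hx
    by_cases hm : x ∈ S u ν
    · rw [Set.indicator_of_mem hm, Set.indicator_of_mem hm, hx, Set.indicator_of_mem hm]
    · rw [Set.indicator_of_notMem hm, Set.indicator_of_notMem hm]
  -- contraction properties of X
  have hXcon : ∀ u w, ‖X u w‖ ≤ ‖w‖ := by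
    intro u w
    have := pilp_norm_le_mul (X u w) w 1 zero_le_one (fun ν => ?_)
    · simpa using this
    rw [one_mul, Lp.norm_def, Lp.norm_def]
    apply ENNReal.toReal_mono (Lp.eLpNorm_ne_top _)
    rw [eLpNorm_congr_ae (hX' u w ν)]
    apply eLpNorm_mono_ae
    filter_upwards with x
    rw [Set.indicator_apply]
    by_cases hm : x ∈ S u ν <;> simp [hm]
  have hXcon' : ∀ u w, ‖w - X u w‖ ≤ ‖w‖ := by
    intro u w
    have := pilp_norm_le_mul (w - X u w) w 1 zero_le_one (fun ν => ?_)
    · simpa using this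
    rw [one_mul, Lp.norm_def, Lp.norm_def]
    apply ENNReal.toReal_mono (Lp.eLpNorm_ne_top _)
    have hsub : ⇑((w - X u w) ν) =ᵐ[μ] ⇑(w ν) - ⇑(X u w ν) := Lp.coeFn_sub (w ν) (X u w ν)
    have hfn : ⇑((w - X u w) ν) =ᵐ[μ]
        (fun x => ⇑(w ν) x - (S u ν).indicator (⇑(w ν)) x) := by
      filter_upwards [hsub, hX' u w ν] with x h1 h2
      rw [h1, Pi.sub_apply, h2]
    rw [eLpNorm_congr_ae hfn]
    apply eLpNorm_mono_ae
    filter_upwards with x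
    rw [Set.indicator_apply]
    by_cases hm : x ∈ S u ν <;> simp [hm]
  -- orthogonality
  have horth : ∀ u (v w : USp N Ω), ⟪v - X u v, X u w⟫ = (0:ℝ) := by
    intro u v w
    rw [PiLp.inner_apply]
    apply Finset.sum_eq_zero
    intro ν _
    rw [L2.inner_def]
    rw [integral_congr_ae (g := fun _ => (0:ℝ))]
    · simp
    · have hsub : ⇑((v - X u v) ν) =ᵐ[μ] ⇑(v ν) - ⇑(X u v ν) := Lp.coeFn_sub (v ν) (X u v ν)
      filter_upwards [hsub, hX' u v ν, hX' u w ν] with x h1 h2 h3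
      simp only [RCLike.inner_apply, starRingEnd_apply, star_trivial]
      rw [h1, Pi.sub_apply, h2, h3]
      rw [Set.indicator_apply, Set.indicator_apply]
      by_cases hm : x ∈ S u ν <;> simp [hm]
  -- bound on E
  have hEbound : ∀ u h, ‖E u h‖ ≤ Cq * (‖DF u‖ * ‖h‖) := by
    intro u h
    have h1 : ‖E u h‖ ≤ Cq * ‖DF u h‖ := by
      apply pilp_norm_le_mul _ _ _ hCq0
      intro ν
      rw [Lp.norm_def, Lp.norm_def, mul_comm Cq]
      rw [← ENNReal.toReal_mul]
      apply ENNReal.toReal_mono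
      · exact ENNReal.mul_ne_top (Lp.eLpNorm_ne_top _) hcqE_ne_top
      rw [eLpNorm_congr_ae (hE' u h ν)]
      refine le_trans (eLpNorm_mono_ae ?_) (hcomp2q _ (Lp.aestronglyMeasurable _))
      filter_upwards with x
      rw [Set.indicator_apply]
      by_cases hm : x ∈ S u ν <;> simp [hm]
    refine h1.trans ?_
    have := (DF u).le_opNorm h
    nlinarith [norm_nonneg (DF u h), norm_nonneg h, norm_nonneg (DF u)]
  -- bijectivity of w ↦ w + α⁻¹ E u w
  have hbij : ∀ u : USp N Ω, Function.Bijective (fun w : USp N Ω => w + α⁻¹ • E u w) := by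
    intro u
    constructor
    · -- injective
      intro w1 w2 h12
      have hzero : ∀ w : USp N Ω, w + α⁻¹ • E u w = 0 → w = 0 := by
        intro w hw
        have hXw : X u (w + α⁻¹ • E u w) = 0 := by rw [hw, map_zero]
        rw [map_add, _root_.map_smul, idXE] at hXw
        have hXww : X u w = w := by
          have := sub_eq_zero.mpr (hXw.trans hw.symm)
          have h2 : X u w - w = 0 := by
            have h3 : (X u w + α⁻¹ • E u w) - (w + α⁻¹ • E u w) = X u w - w := by abel
            rw [← h3, hXw, hw, sub_zero]
          have := sub_eq_zero.mp h2
          exact this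
        have hco := hcoer u w
        rw [hXww, hw] at hco
        simp only [inner_zero_left] at hco
        have : ‖w‖ ^ 2 ≤ 0 := by nlinarith
        have : ‖w‖ = 0 := by nlinarith [sq_nonneg ‖w‖, norm_nonneg w]
        exact norm_eq_zero.mp this
      have hd : (w1 - w2) + α⁻¹ • E u (w1 - w2) = 0 := by
        rw [map_sub, smul_sub, sub_add_sub_comm]
        simp only at h12
        rw [h12, sub_self]
      have := hzero _ hd
      exact sub_eq_zero.mp this
    · -- surjective
      intro v
      set Tlin : USp N Ω →L[ℝ] USp N Ω :=
        ContinuousLinearMap.id ℝ (USp N Ω) + α⁻¹ • ((E u).comp (X u)) with hTlin_def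
      have hTlin_app : ∀ w, Tlin w = w + α⁻¹ • E u (X u w) := by
        intro w
        rw [hTlin_def]
        simp [ContinuousLinearMap.add_apply, ContinuousLinearMap.smul_apply,
          ContinuousLinearMap.comp_apply]
      have hTsurj : Function.Surjective Tlin := by
        apply surj_of_coercive Tlin c hc
        intro w
        rw [hTlin_app]
        exact hcoer u w
      set w₂ : USp N Ω := v - X u v with hw₂_def
      obtain ⟨w₁, hw₁⟩ := hTsurj (X u v - α⁻¹ • E u w₂)
      rw [hTlin_app] at hw₁
      have hXw₁ : X u w₁ = w₁ := by
        have hL : X u (w₁ + α⁻¹ • E u (X u w₁)) = X u w₁ + α⁻¹ • E u (X u w₁) := by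
          rw [map_add, _root_.map_smul]
          congr 1
          rw [idXE]
        have hR : X u (X u v - α⁻¹ • E u w₂) = X u v - α⁻¹ • E u w₂ := by
          rw [map_sub, _root_.map_smul, idXX, idXE]
        have := congrArg (X u) hw₁
        rw [hL, hR] at this
        rw [← hw₁] at this
        have h4 : X u w₁ + α⁻¹ • E u (X u w₁) = w₁ + α⁻¹ • E u (X u w₁) := this
        exact add_right_cancel h4
      refine ⟨w₁ + w₂, ?_⟩
      show (w₁ + w₂) + α⁻¹ • E u (w₁ + w₂) = v
      rw [map_add, smul_add]
      have h5 : w₁ + α⁻¹ • E u w₁ = X u v - α⁻¹ • E u w₂ := by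
        rw [← hw₁, hXw₁]
      calc w₁ + w₂ + (α⁻¹ • E u w₁ + α⁻¹ • E u w₂)
          = (w₁ + α⁻¹ • E u w₁) + w₂ + α⁻¹ • E u w₂ := by abel
        _ = (X u v - α⁻¹ • E u w₂) + w₂ + α⁻¹ • E u w₂ := by rw [h5]
        _ = X u v + w₂ := by abel
        _ = v := by rw [hw₂_def]; abel
  -- a priori bound
  set C₀ : ℝ := (1 + α⁻¹ * (Cq * K)) / c + 1 with hC₀_def
  have hM0 : 0 ≤ α⁻¹ * (Cq * K) := by positivity
  have hC₀1 : 1 ≤ C₀ := by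
    rw [hC₀_def]
    have : 0 ≤ (1 + α⁻¹ * (Cq * K)) / c := by positivity
    linarith
  have hC₀0 : 0 < C₀ := lt_of_lt_of_le one_pos hC₀1
  have hapriori : ∀ u : USp N Ω, ‖u - ubar‖ ≤ δ₀ →
      ∀ w : USp N Ω, ‖w‖ ≤ C₀ * ‖w + α⁻¹ • E u w‖ := by
    intro u hu w
    set M : ℝ := α⁻¹ * (Cq * K) with hM_def
    set w₁ : USp N Ω := X u w with hw₁_def
    set w₂ : USp N Ω := w - w₁ with hw₂_def
    set v : USp N Ω := w + α⁻¹ • E u w with hv_def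
    have hXv : X u v = w₁ + α⁻¹ • E u w := by
      rw [hv_def, map_add, _root_.map_smul, idXE, hw₁_def]
    have hw₂v : w₂ = v - X u v := by
      rw [hXv, hv_def, hw₂_def]
      abel
    have hw₂le : ‖w₂‖ ≤ ‖v‖ := by rw [hw₂v]; exact hXcon' u v
    have hEw : ‖E u w₂‖ ≤ Cq * K * ‖w₂‖ := by
      refine (hEbound u w₂).trans ?_
      have h1 : ‖DF u‖ ≤ K := hK u hu
      have h2 : ‖DF u‖ * ‖w₂‖ ≤ K * ‖w₂‖ := mul_le_mul_of_nonneg_right h1 (norm_nonneg _)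
      calc Cq * (‖DF u‖ * ‖w₂‖) ≤ Cq * (K * ‖w₂‖) := mul_le_mul_of_nonneg_left h2 hCq0
        _ = Cq * K * ‖w₂‖ := by ring
    have hXw₁ : X u w₁ = w₁ := by rw [hw₁_def, idXX]
    have hcoer1 : c * ‖w₁‖^2 ≤ ⟪w₁ + α⁻¹ • E u w₁, w₁⟫ := by
      have := hcoer u w₁
      rwa [hXw₁] at this
    have hvsplit : v = (w₁ + α⁻¹ • E u w₁) + w₂ + α⁻¹ • E u w₂ := by
      rw [hv_def, hw₂_def]
      have : E u w = E u w₁ + E u w₂ := by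
        rw [hw₂_def, map_sub]
        abel
      rw [this, smul_add]
      abel
    have hinner : ⟪v, w₁⟫ = ⟪w₁ + α⁻¹ • E u w₁, w₁⟫ + ⟪w₂, w₁⟫ + α⁻¹ * ⟪E u w₂, w₁⟫ := by
      rw [hvsplit]
      rw [inner_add_left, inner_add_left, real_inner_smul_left]
    have horth1 : ⟪w₂, w₁⟫ = (0:ℝ) := by
      rw [hw₂_def, hw₁_def]
      exact horth u w w
    have habs : |⟪E u w₂, w₁⟫| ≤ Cq * K * ‖w₂‖ * ‖w₁‖ := by
      refine (abs_real_inner_le_norm _ _).trans ?_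
      have := mul_le_mul_of_nonneg_right hEw (norm_nonneg w₁)
      linarith
    have hvw₁ : ⟪v, w₁⟫ ≤ ‖v‖ * ‖w₁‖ := real_inner_le_norm v w₁
    have hkey : c * ‖w₁‖^2 ≤ (1 + M) * (‖v‖ * ‖w₁‖) := by
      have h1 : c * ‖w₁‖^2 ≤ ⟪v, w₁⟫ - ⟪w₂, w₁⟫ - α⁻¹ * ⟪E u w₂, w₁⟫ := by
        rw [hinner]; linarith [hcoer1]
      rw [horth1] at h1
      have hinv : (0:ℝ) ≤ α⁻¹ := by positivity
      have h2 : -(α⁻¹ * ⟪E u w₂, w₁⟫) ≤ α⁻¹ * (Cq * K * ‖w₂‖ * ‖w₁‖) := by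
        have h2' : -⟪E u w₂, w₁⟫ ≤ Cq * K * ‖w₂‖ * ‖w₁‖ := (neg_le_abs _).trans habs
        calc -(α⁻¹ * ⟪E u w₂, w₁⟫) = α⁻¹ * (-⟪E u w₂, w₁⟫) := by ring
          _ ≤ α⁻¹ * (Cq * K * ‖w₂‖ * ‖w₁‖) := mul_le_mul_of_nonneg_left h2' hinv
      have h3 : Cq * K * ‖w₂‖ * ‖w₁‖ ≤ Cq * K * ‖v‖ * ‖w₁‖ := by
        have hck : (0:ℝ) ≤ Cq * K := by positivity
        have := mul_le_mul_of_nonneg_right hw₂le (norm_nonneg w₁)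
        have := mul_le_mul_of_nonneg_left this hck
        calc Cq * K * ‖w₂‖ * ‖w₁‖ = Cq * K * (‖w₂‖ * ‖w₁‖) := by ring
          _ ≤ Cq * K * (‖v‖ * ‖w₁‖) := this
          _ = Cq * K * ‖v‖ * ‖w₁‖ := by ring
      have h3' : α⁻¹ * (Cq * K * ‖w₂‖ * ‖w₁‖) ≤ α⁻¹ * (Cq * K * ‖v‖ * ‖w₁‖) :=
        mul_le_mul_of_nonneg_left h3 hinv
      have hgoal : (1 + M) * (‖v‖ * ‖w₁‖)
          = ‖v‖ * ‖w₁‖ + α⁻¹ * (Cq * K * ‖v‖ * ‖w₁‖) := by rw [hM_def]; ring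
      rw [hgoal]
      linarith [h1, h2, h3', hvw₁]
    have hnw : ‖w‖ ≤ ‖w₁‖ + ‖w₂‖ := by
      have : w = w₁ + w₂ := by rw [hw₂_def]; abel
      rw [this]
      exact norm_add_le _ _
    rcases eq_or_lt_of_le (norm_nonneg w₁) with h0 | h0
    · have : ‖w‖ ≤ ‖w₂‖ := by rw [← h0] at hnw; linarith
      calc ‖w‖ ≤ ‖v‖ := this.trans hw₂le
        _ ≤ C₀ * ‖v‖ := le_mul_of_one_le_left (norm_nonneg v) hC₀1
    · have h4 : c * ‖w₁‖ ≤ (1 + M) * ‖v‖ := by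
        have h5 : (c * ‖w₁‖) * ‖w₁‖ ≤ ((1 + M) * ‖v‖) * ‖w₁‖ := by nlinarith [hkey]
        exact le_of_mul_le_mul_right h5 h0
      have h6 : ‖w₁‖ ≤ (1 + M) / c * ‖v‖ := by
        rw [div_mul_eq_mul_div, le_div_iff₀ hc]
        linarith [h4]
      calc ‖w‖ ≤ ‖w₁‖ + ‖w₂‖ := hnw
        _ ≤ (1 + M) / c * ‖v‖ + ‖v‖ := add_le_add h6 hw₂le
        _ = C₀ * ‖v‖ := by rw [hC₀_def, hM_def]; ring
  -- pointwise description of G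
  have hGcomp : ∀ u ν, ⇑((G u) ν) =ᵐ[μ]
      fun x => u ν x - max (ua ν x) (min (-α⁻¹ * (Ft u ν) x) (ub ν x)) := by
    intro u ν
    have e0 : (G u) ν = u ν - (P (-(α⁻¹:ℝ) • Ft u)) ν := by rw [hG u]; rfl
    rw [e0]
    have h1 := Lp.coeFn_sub (u ν) ((P (-(α⁻¹:ℝ) • Ft u)) ν)
    have h2 := hP (-(α⁻¹:ℝ) • Ft u) ν
    have h3 := Lp.coeFn_smul (-(α⁻¹:ℝ)) (Ft u ν)
    filter_upwards [h1, h2, h3] with x e1 e2 e3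
    rw [e1, Pi.sub_apply, e2]
    rw [show ((-(α⁻¹:ℝ)) • Ft u) ν = (-(α⁻¹:ℝ)) • (Ft u ν) from rfl] at *
    rw [e3]
    simp only [Pi.smul_apply, smul_eq_mul]
  -- Lipschitz bound near ubar
  obtain ⟨K₀, sLip, hsLip_mem, hsLip⟩ := hLip ubar
  obtain ⟨r, hr0, hrball⟩ := Metric.mem_nhds_iff.mp hsLip_mem
  set L : ℝ := (K₀ : ℝ) with hL_def
  have hL0 : (0:ℝ) ≤ L := K₀.coe_nonneg
  have hLipBall : ∀ u : USp N Ω, ‖u - ubar‖ ≤ r/2 → ‖Ft u - Ft ubar‖ ≤ L * ‖u - ubar‖ := by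
    intro u hu
    have hu' : u ∈ sLip := hrball (by
      rw [Metric.mem_ball, dist_eq_norm]; linarith [hu, hr0])
    have hubar' : ubar ∈ sLip := hrball (Metric.mem_ball_self hr0)
    have := hsLip.dist_le_mul u hu' ubar hubar'
    rw [dist_eq_norm, dist_eq_norm] at this
    exact this
  -- smallness of the Newton remainder
  have hρsmall : ∀ cρ > (0:ℝ), ∃ δρ > (0:ℝ), ∀ u : USp N Ω, ‖u - ubar‖ ≤ δρ →
      ‖Ft u - Ft ubar - DF u (u - ubar)‖ ≤ cρ * ‖u - ubar‖ := by
    intro cρ hcρ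
    have h1 := (hNF ubar).def hcρ
    rw [Metric.eventually_nhds_iff] at h1
    obtain ⟨δρ, hδρ0, hδρ⟩ := h1
    refine ⟨δρ/2, by positivity, fun u hu => ?_⟩
    have h2 := hδρ (y := u - ubar) (by rw [dist_zero_right]; linarith [hu, hδρ0])
    have h3 : ubar + (u - ubar) = u := by abel
    rw [h3] at h2
    exact h2
  -- measurable representatives
  set a' : Fin N → EuclideanSpace ℝ (Fin n) → ℝ :=
    fun ν => (Lp.aestronglyMeasurable (ua ν)).mk ⇑(ua ν) with ha'_def
  set b' : Fin N → EuclideanSpace ℝ (Fin n) → ℝ :=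
    fun ν => (Lp.aestronglyMeasurable (ub ν)).mk ⇑(ub ν) with hb'_def
  set F1 : Fin N → EuclideanSpace ℝ (Fin n) → ℝ :=
    fun ν => (Lp.aestronglyMeasurable (Ft ubar ν)).mk ⇑(Ft ubar ν) with hF1_def
  set Y1' : Fin N → EuclideanSpace ℝ (Fin n) → ℝ := fun ν x => -α⁻¹ * F1 ν x with hY1'_def
  have ham : ∀ ν, Measurable (a' ν) :=
    fun ν => ((Lp.aestronglyMeasurable (ua ν)).stronglyMeasurable_mk).measurable
  have hbm : ∀ ν, Measurable (b' ν) :=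
    fun ν => ((Lp.aestronglyMeasurable (ub ν)).stronglyMeasurable_mk).measurable
  have hF1m : ∀ ν, Measurable (F1 ν) :=
    fun ν => ((Lp.aestronglyMeasurable (Ft ubar ν)).stronglyMeasurable_mk).measurable
  have hY1m : ∀ ν, Measurable (Y1' ν) := fun ν => (hF1m ν).const_mul _
  have ha_eq : ∀ ν, ⇑(ua ν) =ᵐ[μ] a' ν := fun ν => (Lp.aestronglyMeasurable (ua ν)).ae_eq_mk
  have hb_eq : ∀ ν, ⇑(ub ν) =ᵐ[μ] b' ν := fun ν => (Lp.aestronglyMeasurable (ub ν)).ae_eq_mk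
  have hF1_eq : ∀ ν, ⇑(Ft ubar ν) =ᵐ[μ] F1 ν :=
    fun ν => (Lp.aestronglyMeasurable (Ft ubar ν)).ae_eq_mk
  have hab' : ∀ ν, ∀ᵐ x ∂μ, a' ν x ≤ b' ν x := by
    intro ν
    filter_upwards [hab ν, ha_eq ν, hb_eq ν] with x h1 h2 h3
    rw [← h2, ← h3]
    exact h1
  -- Newton differentiability of G at ubar
  have hGdiff : ∀ ε' > (0:ℝ), ∃ δ' > (0:ℝ), ∀ u : USp N Ω, ‖u - ubar‖ ≤ δ' →
      ‖G u - G ubar - ((u - ubar) + α⁻¹ • E u (u - ubar))‖ ≤ ε' * ‖u - ubar‖ := by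
    intro ε' hε'
    have hinv : (0:ℝ) ≤ α⁻¹ := by positivity
    set D1 : ℝ := (N:ℝ) * α⁻¹ * (L + 1) + 1 with hD1
    set D2 : ℝ := (N:ℝ) * α⁻¹ * Cq + 1 with hD2
    have hD10 : 0 < D1 := by positivity
    have hD20 : 0 < D2 := by positivity
    set εc : ℝ := ε' / (2 * D1) with hεc
    set cρ : ℝ := ε' / (2 * D2) with hcρ
    have hεc0 : 0 < εc := by positivity
    have hcρ0 : 0 < cρ := by positivity
    have hν : ∀ ν : Fin N, ∃ δν > (0:ℝ), ∀ Y2 : EuclideanSpace ℝ (Fin n) → ℝ, Measurable Y2 →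
        eLpNorm (fun x => Y2 x - Y1' ν x) q μ ≤ ENNReal.ofReal δν →
        eLpNorm (fun x => max (a' ν x) (min (Y2 x) (b' ν x))
            - max (a' ν x) (min (Y1' ν x) (b' ν x))
            - (if a' ν x < Y2 x ∧ Y2 x < b' ν x then Y2 x - Y1' ν x else 0)) 2 μ
          ≤ ENNReal.ofReal εc * eLpNorm (fun x => Y2 x - Y1' ν x) q μ :=
      fun ν => lemC' μ q hq (a' ν) (b' ν) (Y1' ν) (ham ν) (hbm ν) (hY1m ν) (hab' ν) hεc0
    choose δν hδν0 hδνP using hν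
    obtain ⟨dmin, hdmin0, hdmin⟩ := fin_min δν hδν0
    obtain ⟨δρ, hδρ0, hδρP⟩ := hρsmall cρ hcρ0
    refine ⟨min (min (r/2) δρ) (dmin * α / (L+1)), by positivity, fun u hu => ?_⟩
    set t : ℝ := ‖u - ubar‖ with ht_def
    have ht0 : 0 ≤ t := norm_nonneg _
    have hu1 : t ≤ r/2 := le_trans hu (le_trans (min_le_left _ _) (min_le_left _ _))
    have hu2 : t ≤ δρ := le_trans hu (le_trans (min_le_left _ _) (min_le_right _ _))
    have hu3 : t ≤ dmin * α / (L+1) := le_trans hu (min_le_right _ _)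
    set ρq : UqSp N q Ω := Ft u - Ft ubar - DF u (u - ubar) with hρq
    have hρbound : ‖ρq‖ ≤ cρ * t := hδρP u hu2
    have hFtdiff : ‖Ft u - Ft ubar‖ ≤ L * t := hLipBall u hu1
    set wdiff : UqSp N q Ω := (-(α⁻¹:ℝ)) • (Ft u - Ft ubar) with hwdiff
    have hwnorm : ‖wdiff‖ ≤ α⁻¹ * (L * t) := by
      rw [hwdiff, norm_smul]
      simp only [norm_neg, Real.norm_eq_abs, abs_of_nonneg hinv]
      exact mul_le_mul_of_nonneg_left hFtdiff hinv
    set Delt : USp N Ω := G u - G ubar - ((u - ubar) + α⁻¹ • E u (u - ubar)) with hDelt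
    -- component estimate
    have hcompν : ∀ ν : Fin N, ‖Delt ν‖ ≤ εc * (α⁻¹ * (L * t)) + α⁻¹ * ((cρ * t) * Cq) := by
      intro ν
      set F2 : EuclideanSpace ℝ (Fin n) → ℝ :=
        (Lp.aestronglyMeasurable (Ft u ν)).mk ⇑(Ft u ν) with hF2_def
      have hF2m : Measurable F2 :=
        ((Lp.aestronglyMeasurable (Ft u ν)).stronglyMeasurable_mk).measurable
      have hF2_eq : ⇑(Ft u ν) =ᵐ[μ] F2 := (Lp.aestronglyMeasurable (Ft u ν)).ae_eq_mk
      set Y2 : EuclideanSpace ℝ (Fin n) → ℝ := fun x => -α⁻¹ * F2 x with hY2_def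
      have hY2m : Measurable Y2 := hF2m.const_mul _
      set mkρ : EuclideanSpace ℝ (Fin n) → ℝ :=
        (Lp.aestronglyMeasurable (ρq ν)).mk ⇑(ρq ν) with hmkρ_def
      have hmkρm : Measurable mkρ :=
        ((Lp.aestronglyMeasurable (ρq ν)).stronglyMeasurable_mk).measurable
      have hmkρ_eq : ⇑(ρq ν) =ᵐ[μ] mkρ := (Lp.aestronglyMeasurable (ρq ν)).ae_eq_mk
      set S' : Set (EuclideanSpace ℝ (Fin n)) := {x | a' ν x < Y2 x ∧ Y2 x < b' ν x} with hS'_def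
      have hS'm : MeasurableSet S' :=
        (measurableSet_lt (ham ν) hY2m).inter (measurableSet_lt hY2m (hbm ν))
      set T' : EuclideanSpace ℝ (Fin n) → ℝ := fun x =>
        max (a' ν x) (min (Y2 x) (b' ν x)) - max (a' ν x) (min (Y1' ν x) (b' ν x))
          - (if a' ν x < Y2 x ∧ Y2 x < b' ν x then Y2 x - Y1' ν x else 0) with hT'_def
      have hT'm : Measurable T' := by
        apply Measurable.sub
        · exact ((ham ν).max (hY2m.min (hbm ν))).sub ((ham ν).max ((hY1m ν).min (hbm ν)))
        · exact Measurable.ite hS'm (hY2m.sub (hY1m ν)) measurable_const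
      set g2 : EuclideanSpace ℝ (Fin n) → ℝ := fun x => α⁻¹ * S'.indicator mkρ x with hg2_def
      have hg2m : Measurable g2 := (hmkρm.indicator hS'm).const_mul _
      -- identification of the L^q increment
      have hz_eq : (fun x => Y2 x - Y1' ν x) =ᵐ[μ] ⇑(wdiff ν) := by
        have e1 := Lp.coeFn_smul (-(α⁻¹:ℝ)) (Ft u ν - Ft ubar ν)
        have e2 := Lp.coeFn_sub (Ft u ν) (Ft ubar ν)
        filter_upwards [e1, e2, hF2_eq, hF1_eq ν] with x f1 f2 f3 f4
        have hL1 : Y2 x - Y1' ν x = -α⁻¹ * (⇑(Ft u ν) x - ⇑(Ft ubar ν) x) := by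
          show -α⁻¹ * F2 x - -α⁻¹ * F1 ν x = -α⁻¹ * (⇑(Ft u ν) x - ⇑(Ft ubar ν) x)
          rw [← f3, ← f4]
          ring
        rw [hL1, show (wdiff ν) = (-(α⁻¹:ℝ)) • (Ft u ν - Ft ubar ν) from rfl, f1]
        simp only [Pi.smul_apply, smul_eq_mul]
        rw [f2, Pi.sub_apply]
        all_goals ring
      have heznorm : eLpNorm (fun x => Y2 x - Y1' ν x) q μ = ENNReal.ofReal ‖wdiff ν‖ := by
        rw [eLpNorm_congr_ae hz_eq, ofReal_norm_lp]
      have hwcomp : ‖wdiff ν‖ ≤ α⁻¹ * (L * t) := (pilp_comp_le wdiff ν).trans hwnorm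
      have hwdmin : ‖wdiff ν‖ ≤ dmin := by
        have h2 : α⁻¹ * (L * t) ≤ α⁻¹ * ((L+1) * (dmin * α / (L+1))) := by
          apply mul_le_mul_of_nonneg_left _ hinv
          calc L * t ≤ (L+1) * t := by nlinarith
            _ ≤ (L+1) * (dmin * α / (L+1)) :=
                mul_le_mul_of_nonneg_left hu3 (by linarith)
        have h3 : α⁻¹ * ((L+1) * (dmin * α / (L+1))) = dmin := by
          field_simp
        linarith [hwcomp]
      -- the T' bound from lemC'
      have hTbound : eLpNorm T' 2 μ ≤ ENNReal.ofReal εc * ENNReal.ofReal ‖wdiff ν‖ := by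
        have := hδνP ν Y2 hY2m (by
          rw [heznorm]
          exact ENNReal.ofReal_le_ofReal (hwdmin.trans (hdmin ν)))
        rw [heznorm] at this
        exact this
      -- the a.e. identity for the component of Delt
      have hDν : ⇑(Delt ν) =ᵐ[μ] fun x => -(T' x) + g2 x := by
        have e0 : Delt ν = ((G u) ν - (G ubar) ν)
            - ((u ν - ubar ν) + (α⁻¹:ℝ) • (E u (u - ubar)) ν) := rfl
        rw [e0]
        have hDFsplit : DF u (u - ubar) = Ft u - Ft ubar - ρq := by rw [hρq]; abel
        have hDFeq : ⇑((DF u (u - ubar)) ν) =ᵐ[μ]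
            fun x => (Ft u ν) x - (Ft ubar ν) x - ⇑(ρq ν) x := by
          have e1 : (DF u (u - ubar)) ν = (Ft u ν - Ft ubar ν) - ρq ν := by
            rw [hDFsplit]; rfl
          rw [e1]
          filter_upwards [Lp.coeFn_sub (Ft u ν - Ft ubar ν) (ρq ν),
            Lp.coeFn_sub (Ft u ν) (Ft ubar ν)] with x f1 f2
          rw [f1, Pi.sub_apply, f2, Pi.sub_apply]
        have h5 := Lp.coeFn_sub ((G u) ν - (G ubar) ν)
          ((u ν - ubar ν) + (α⁻¹:ℝ) • (E u (u - ubar)) ν)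
        have h6 := Lp.coeFn_sub ((G u) ν) ((G ubar) ν)
        have h7 := Lp.coeFn_add (u ν - ubar ν) ((α⁻¹:ℝ) • (E u (u - ubar)) ν)
        have h8 := Lp.coeFn_sub (u ν) (ubar ν)
        have h9 := Lp.coeFn_smul (α⁻¹:ℝ) ((E u (u - ubar)) ν)
        filter_upwards [h5, h6, h7, h8, h9, hGcomp u ν, hGcomp ubar ν,
          hE' u (u - ubar) ν, hDFeq, ha_eq ν, hb_eq ν, hF1_eq ν, hF2_eq, hmkρ_eq]
          with x e5 e6 e7 e8 e9 eGu eGub eE eDF ea eb eF1 eF2 eρ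
        rw [e5, Pi.sub_apply, e6, Pi.sub_apply, e7, Pi.add_apply, e8, Pi.sub_apply,
          e9, Pi.smul_apply, smul_eq_mul, eGu, eGub, eE]
        have hYx : Y2 x = -α⁻¹ * (Ft u ν) x := by
          show -α⁻¹ * F2 x = -α⁻¹ * (Ft u ν) x
          rw [eF2]
        have hY1x : Y1' ν x = -α⁻¹ * (Ft ubar ν) x := by
          show -α⁻¹ * F1 ν x = -α⁻¹ * (Ft ubar ν) x
          rw [eF1]
        have hax : a' ν x = (ua ν) x := ea.symm
        have hbx : b' ν x = (ub ν) x := eb.symm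
        have hmem_iff : (x ∈ S u ν) ↔ (a' ν x < Y2 x ∧ Y2 x < b' ν x) := by
          rw [hS_def]
          simp only [Set.mem_setOf_eq]
          rw [hYx, hax, hbx]
        by_cases hmem : x ∈ S u ν
        · have hmem' : a' ν x < Y2 x ∧ Y2 x < b' ν x := hmem_iff.mp hmem
          rw [Set.indicator_of_mem hmem, eDF]
          simp only [hT'_def, hg2_def]
          have hmemS' : x ∈ S' := hmem'
          rw [if_pos hmem', Set.indicator_of_mem hmemS']
          rw [hYx, hY1x, hax, hbx, eρ]
          ring
        · have hmem' : ¬(a' ν x < Y2 x ∧ Y2 x < b' ν x) := fun h => hmem (hmem_iff.mpr h)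
          rw [Set.indicator_of_notMem hmem]
          simp only [hT'_def, hg2_def]
          have hmemS' : x ∉ S' := hmem'
          rw [if_neg hmem', Set.indicator_of_notMem hmemS']
          rw [hYx, hY1x, hax, hbx]
          ring
      -- assemble the eLpNorm bound
      have hg2bound : eLpNorm g2 2 μ
          ≤ ENNReal.ofReal α⁻¹ * (ENNReal.ofReal ‖ρq ν‖ * cqE) := by
        have e1 : eLpNorm g2 2 μ = ‖(α⁻¹:ℝ)‖₊ * eLpNorm (S'.indicator mkρ) 2 μ := by
          rw [show g2 = (α⁻¹:ℝ) • S'.indicator mkρ from rfl]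
          exact eLpNorm_const_smul (α⁻¹:ℝ) (S'.indicator mkρ) 2 μ
        rw [e1]
        have e2 : (‖(α⁻¹:ℝ)‖₊ : ℝ≥0∞) = ENNReal.ofReal α⁻¹ := by
          rw [show ((‖(α⁻¹:ℝ)‖₊ : ℝ≥0∞)) = ‖(α⁻¹:ℝ)‖ₑ from rfl, Real.enorm_eq_ofReal_abs, abs_of_nonneg hinv]
        rw [e2]
        apply mul_le_mul_right
        have e3 : eLpNorm (S'.indicator mkρ) 2 μ ≤ eLpNorm mkρ 2 μ := by
          apply eLpNorm_mono_ae
          filter_upwards with x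
          rw [Set.indicator_apply]
          by_cases hm : x ∈ S' <;> simp [hm]
        refine e3.trans ?_
        have e4 : eLpNorm mkρ 2 μ ≤ eLpNorm mkρ q μ * cqE :=
          hcomp2q mkρ hmkρm.aestronglyMeasurable
        refine e4.trans ?_
        rw [eLpNorm_congr_ae hmkρ_eq.symm, ofReal_norm_lp]
      have htotal : eLpNorm ⇑(Delt ν) 2 μ
          ≤ ENNReal.ofReal (εc * ‖wdiff ν‖) + ENNReal.ofReal (α⁻¹ * (‖ρq ν‖ * Cq)) := by
        rw [eLpNorm_congr_ae hDν]
        refine le_trans (eLpNorm_add_le (f := fun x => -(T' x)) (g := g2)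
          hT'm.neg.aestronglyMeasurable hg2m.aestronglyMeasurable one_le_two) ?_
        have hneg : eLpNorm (fun x => -(T' x)) 2 μ = eLpNorm T' 2 μ := eLpNorm_neg T' 2 μ
        rw [hneg]
        apply add_le_add
        · refine hTbound.trans (le_of_eq ?_)
          rw [← ENNReal.ofReal_mul hεc0.le]
        · refine hg2bound.trans (le_of_eq ?_)
          rw [show cqE = ENNReal.ofReal Cq from (ENNReal.ofReal_toReal hcqE_ne_top).symm]
          rw [← ENNReal.ofReal_mul (norm_nonneg _), ← ENNReal.ofReal_mul hinv]
      have hreal : ‖Delt ν‖ ≤ εc * ‖wdiff ν‖ + α⁻¹ * (‖ρq ν‖ * Cq) := by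
        rw [Lp.norm_def]
        have h1 := ENNReal.toReal_mono (by
          exact ENNReal.add_ne_top.mpr ⟨ENNReal.ofReal_ne_top, ENNReal.ofReal_ne_top⟩) htotal
        rw [ENNReal.toReal_add ENNReal.ofReal_ne_top ENNReal.ofReal_ne_top,
          ENNReal.toReal_ofReal (by positivity), ENNReal.toReal_ofReal (by positivity)] at h1
        exact h1
      refine hreal.trans ?_
      apply add_le_add
      · exact mul_le_mul_of_nonneg_left hwcomp hεc0.le
      · apply mul_le_mul_of_nonneg_left _ hinv
        have : ‖ρq ν‖ ≤ ‖ρq‖ := pilp_comp_le ρq ν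
        apply mul_le_mul_of_nonneg_right _ hCq0
        linarith [hρbound]
    -- sum the components
    have hsum : ‖Delt‖ ≤ (N:ℝ) * (εc * (α⁻¹ * (L * t)) + α⁻¹ * ((cρ * t) * Cq)) := by
      refine (pilp_norm_le_sum Delt).trans ?_
      calc ∑ ν, ‖Delt ν‖ ≤ ∑ _ν : Fin N, (εc * (α⁻¹ * (L * t)) + α⁻¹ * ((cρ * t) * Cq)) :=
            Finset.sum_le_sum (fun ν _ => hcompν ν)
        _ = (N:ℝ) * (εc * (α⁻¹ * (L * t)) + α⁻¹ * ((cρ * t) * Cq)) := by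
            rw [Finset.sum_const, Finset.card_univ, Fintype.card_fin, nsmul_eq_mul]
    have e1 : εc * ((N:ℝ) * α⁻¹ * L) ≤ ε'/2 := by
      have h1 : (N:ℝ) * α⁻¹ * L ≤ D1 := by
        rw [hD1]
        nlinarith [mul_nonneg (mul_nonneg (Nat.cast_nonneg N) hinv) hL0,
          mul_nonneg (Nat.cast_nonneg N : (0:ℝ) ≤ N) hinv]
      have h2 : εc * ((N:ℝ) * α⁻¹ * L) ≤ εc * D1 := mul_le_mul_of_nonneg_left h1 hεc0.le
      have h3 : εc * D1 = ε'/2 := by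
        rw [hεc]
        field_simp
      linarith
    have e2 : cρ * ((N:ℝ) * α⁻¹ * Cq) ≤ ε'/2 := by
      have h1 : (N:ℝ) * α⁻¹ * Cq ≤ D2 := by
        rw [hD2]
        linarith
      have h2 : cρ * ((N:ℝ) * α⁻¹ * Cq) ≤ cρ * D2 := mul_le_mul_of_nonneg_left h1 hcρ0.le
      have h3 : cρ * D2 = ε'/2 := by
        rw [hcρ]
        field_simp
      linarith
    have := mul_le_mul_of_nonneg_right e1 ht0
    have := mul_le_mul_of_nonneg_right e2 ht0
    rw [ht_def] at hsum ⊢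
    nlinarith [hsum]
  -- setting up the iteration
  obtain ⟨δ₂, hδ₂0, hδ₂⟩ := hGdiff (1/(2*C₀)) (by positivity)
  set δ₁ : ℝ := min δ₀ δ₂ with hδ₁_def
  have hδ₁0 : 0 < δ₁ := lt_min hδ₀0 hδ₂0
  have hexists : ∀ u : USp N Ω, ∃ d : USp N Ω, d + α⁻¹ • E u d = -G u := by
    intro u
    obtain ⟨d, hd⟩ := (hbij u).2 (-G u)
    exact ⟨d, hd⟩
  choose estep hestep using hexists
  refine ⟨δ₁, hδ₁0, C₀, fun u0 hu0 => ?_⟩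
  set Φ : USp N Ω → USp N Ω := fun u => u + estep u with hΦ_def
  set useq : ℕ → USp N Ω := fun k => Φ^[k] u0 with huseq_def
  have huseq0 : useq 0 = u0 := rfl
  have huseqS : ∀ k, useq (k+1) = Φ (useq k) := fun k => Function.iterate_succ_apply' Φ k u0
  have honestep : ∀ u : USp N Ω, ‖u - ubar‖ ≤ δ₀ →
      ‖Φ u - ubar‖ ≤ C₀ * ‖G u - G ubar - ((u - ubar) + α⁻¹ • E u (u - ubar))‖ := by
    intro u hu
    have h1 : (Φ u - ubar) + α⁻¹ • E u (Φ u - ubar)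
        = -(G u - G ubar - ((u - ubar) + α⁻¹ • E u (u - ubar))) := by
      have h2 : Φ u - ubar = (u - ubar) + estep u := by
        simp only [hΦ_def]
        abel
      rw [h2, map_add, smul_add, hroot]
      have h3 := hestep u
      calc (u - ubar) + estep u + (α⁻¹ • E u (u - ubar) + α⁻¹ • E u (estep u))
          = ((u - ubar) + α⁻¹ • E u (u - ubar)) + (estep u + α⁻¹ • E u (estep u)) := by abel
        _ = ((u - ubar) + α⁻¹ • E u (u - ubar)) + (-G u) := by rw [h3]
        _ = -(G u - 0 - ((u - ubar) + α⁻¹ • E u (u - ubar))) := by abel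
    have h4 := hapriori u hu (Φ u - ubar)
    rw [h1, norm_neg] at h4
    exact h4
  have hcontr : ∀ u : USp N Ω, ‖u - ubar‖ ≤ δ₁ → ‖Φ u - ubar‖ ≤ (1/2) * ‖u - ubar‖ := by
    intro u hu
    have h5 := honestep u (hu.trans (min_le_left _ _))
    have h6 := hδ₂ u (hu.trans (min_le_right _ _))
    calc ‖Φ u - ubar‖ ≤ C₀ * (1/(2*C₀) * ‖u - ubar‖) :=
          h5.trans (mul_le_mul_of_nonneg_left h6 hC₀0.le)
      _ = 1/2 * ‖u - ubar‖ := by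
          field_simp
  have hball : ∀ k, ‖useq k - ubar‖ ≤ (1/2:ℝ)^k * δ₁ := by
    intro k
    induction k with
    | zero => simpa [huseq0] using hu0
    | succ k ih =>
      have hpow : (1/2:ℝ)^k ≤ 1 := pow_le_one₀ (by norm_num) (by norm_num)
      have h7 : ‖useq k - ubar‖ ≤ δ₁ := ih.trans (by nlinarith [hδ₁0])
      rw [huseqS k]
      calc ‖Φ (useq k) - ubar‖ ≤ 1/2 * ‖useq k - ubar‖ := hcontr _ h7
        _ ≤ 1/2 * ((1/2:ℝ)^k * δ₁) := by linarith [ih]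
        _ = (1/2:ℝ)^(k+1) * δ₁ := by ring
  have hballδ : ∀ k, ‖useq k - ubar‖ ≤ δ₁ := by
    intro k
    have hpow : (1/2:ℝ)^k ≤ 1 := pow_le_one₀ (by norm_num) (by norm_num)
    refine (hball k).trans ?_
    nlinarith [hδ₁0]
  have hpowtend : Tendsto (fun k : ℕ => (1/2:ℝ)^k * δ₁) atTop (𝓝 0) := by
    have h1 := tendsto_pow_atTop_nhds_zero_of_lt_one (by norm_num : (0:ℝ) ≤ 1/2)
      (by norm_num : (1/2:ℝ) < 1)
    simpa using h1.mul_const δ₁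
  refine ⟨useq, huseq0, ?_, ?_, ?_⟩
  · intro k
    refine ⟨hbij (useq k), hapriori (useq k) ((hballδ k).trans (min_le_left _ _)), ?_⟩
    rw [huseqS k]
    have h8 : Φ (useq k) - useq k = estep (useq k) := by
      simp only [hΦ_def]
      abel
    rw [h8]
    exact hestep (useq k)
  · rw [tendsto_iff_dist_tendsto_zero]
    exact squeeze_zero (fun k => dist_nonneg)
      (fun k => by rw [dist_eq_norm]; exact hball k) hpowtend
  · rw [isLittleO_iff]
    intro cc hcc
    obtain ⟨δ₃, hδ₃0, hδ₃⟩ := hGdiff (cc/C₀) (by positivity)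
    have hmin0 : 0 < min δ₃ δ₀ := lt_min hδ₃0 hδ₀0
    have hev : ∀ᶠ k in atTop, ‖useq k - ubar‖ ≤ min δ₃ δ₀ := by
      filter_upwards [hpowtend.eventually_le_const hmin0] with k hk
      exact (hball k).trans hk
    filter_upwards [hev] with k hk
    rw [Real.norm_of_nonneg (norm_nonneg _), Real.norm_of_nonneg (norm_nonneg _), huseqS k]
    have h8 := honestep (useq k) (hk.trans (min_le_right _ _))
    have h9 := hδ₃ (useq k) (hk.trans (min_le_left _ _))
    calc ‖Φ (useq k) - ubar‖ ≤ C₀ * (cc/C₀ * ‖useq k - ubar‖) :=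
          h8.trans (mul_le_mul_of_nonneg_left h9 hC₀0.le)
      _ = cc * ‖useq k - ubar‖ := by
          field_simp
end
end

section
/- Let ρ > 0, α > 0, let Y ⊆ Ω and I^ν ⊆ Ω (ν = 1,…,N) be measurable sets with indicator functions χ_Y and χ_{I^ν}, and define M : U → U by (M w)^ν := S_ν*(χ_ν S w + ρ χ_Y S w) and χ_I : U → U componentwise by (χ_I w)^ν := χ_{I^ν} w^ν. Then for all w ∈ U, ((Id + α^{−1} χ_I M χ_I) w, w)_U ≥ (1 − (1/(4α)) Σ_{ν=1}^N ‖χ_Z(S_ν − χ_ν S_ν)‖²_{L²(Ω)→L²(Ω)}) ‖w‖²_U. In particular, if α > (1/4) Σ_{ν=1}^N ‖χ_Z(S_ν − χ_ν S_ν)‖²_{L²(Ω)→L²(Ω)}, this bilinear form is coercive. -/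
open MeasureTheory
open scoped RealInnerProductSpace ENNReal

noncomputable section

section Helpers
variable {X : Type*} [MeasurableSpace X] {μ : Measure X}

lemma l2inner (f g : Lp ℝ 2 μ) : ⟪f, g⟫ = ∫ x, f x * g x ∂μ := by
  rw [MeasureTheory.L2.inner_def]; simp [RCLike.inner_apply]
  exact integral_congr_ae (Filter.Eventually.of_forall fun x => mul_comm _ _)

lemma ind_swap (A : Set X) (f g f' g' : Lp ℝ 2 μ)
    (hf' : ⇑f' =ᵐ[μ] A.indicator ⇑f) (hg' : ⇑g' =ᵐ[μ] A.indicator ⇑g) :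
    ⟪f', g⟫ = ⟪f, g'⟫ := by
  rw [l2inner, l2inner]
  refine integral_congr_ae ?_
  filter_upwards [hf', hg'] with x h1 h2
  rw [h1, h2]
  by_cases hx : x ∈ A <;> simp [Set.indicator_of_mem, Set.indicator_of_notMem, hx]

lemma ind_idem (A : Set X) (f g f' g' : Lp ℝ 2 μ)
    (hf' : ⇑f' =ᵐ[μ] A.indicator ⇑f) (hg' : ⇑g' =ᵐ[μ] A.indicator ⇑g) :
    ⟪f', g'⟫ = ⟪f', g⟫ := by
  rw [l2inner, l2inner]
  refine integral_congr_ae ?_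
  filter_upwards [hf', hg'] with x h1 h2
  rw [h1, h2]
  by_cases hx : x ∈ A <;> simp [Set.indicator_of_mem, Set.indicator_of_notMem, hx]

lemma ind_subset {A B : Set X} (hAB : A ⊆ B) (f g fA fB gA : Lp ℝ 2 μ)
    (hfA : ⇑fA =ᵐ[μ] A.indicator ⇑f) (hfB : ⇑fB =ᵐ[μ] B.indicator ⇑f)
    (hgA : ⇑gA =ᵐ[μ] A.indicator ⇑g) :
    ⟪fA, g⟫ = ⟪fB, gA⟫ := by
  rw [l2inner, l2inner]
  refine integral_congr_ae ?_
  filter_upwards [hfA, hfB, hgA] with x h1 h2 h3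
  rw [h1, h2, h3]
  by_cases hx : x ∈ A
  · simp [Set.indicator_of_mem, hx, hAB hx]
  · simp [Set.indicator_of_notMem, hx]

lemma ind_norm_le (A : Set X) (f f' : Lp ℝ 2 μ) (hf' : ⇑f' =ᵐ[μ] A.indicator ⇑f) :
    ‖f'‖ ≤ ‖f‖ := by
  have h1 : ⟪f', f'⟫ = ⟪f', f⟫ := ind_idem A f f f' f' hf' hf'
  have h2 : ⟪f', f⟫ ≤ ‖f'‖ * ‖f‖ := real_inner_le_norm _ _
  rw [real_inner_self_eq_norm_sq] at h1
  nlinarith [norm_nonneg f', norm_nonneg f]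

end Helpers

set_option maxHeartbeats 4000000 in
/-- For `ρ, α > 0`, measurable sets `Y, I^ν ⊆ Ω` and the operator
`(M w)^ν = S_ν*(χ_ν S w + ρ χ_Y S w)`, one has for all `w ∈ U`
`((Id + α⁻¹ χ_I M χ_I) w, w)_U ≥ (1 − (1/(4α)) Σ_ν ‖χ_Z(S_ν − χ_ν S_ν)‖²) ‖w‖²`.
In particular, if `α` exceeds the offset, this bilinear form is coercive. -/
theorem stmt15 {n N : ℕ} (Ω : Set (EuclideanSpace ℝ (Fin n)))
    (Ων : Fin N → Set (EuclideanSpace ℝ (Fin n))) (hΩν : ∀ ν, Ων ν ⊆ Ω)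
    (Y : Set (EuclideanSpace ℝ (Fin n))) (hY : MeasurableSet Y) (hYΩ : Y ⊆ Ω)
    (Iν : Fin N → Set (EuclideanSpace ℝ (Fin n)))
    (hIν : ∀ ν, MeasurableSet (Iν ν)) (hIνΩ : ∀ ν, Iν ν ⊆ Ω)
    (ρ α : ℝ) (hρ : 0 < ρ) (hα : 0 < α)
    (S : Fin N → (L2Sp Ω →L[ℝ] L2Sp Ω))
    -- `χ ν` is multiplication by the characteristic function of `Ω_ν` on `L²(Ω)`
    (χ : Fin N → (L2Sp Ω →L[ℝ] L2Sp Ω))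
    (hχ : ∀ ν (f : L2Sp Ω), ⇑(χ ν f) =ᵐ[volume.restrict Ω] (Ων ν).indicator ⇑f)
    -- `χZ` is multiplication by the characteristic function of `Z = ⋃ ν, Ω_ν`
    (χZ : L2Sp Ω →L[ℝ] L2Sp Ω)
    (hχZ : ∀ f : L2Sp Ω, ⇑(χZ f) =ᵐ[volume.restrict Ω] (⋃ ν, Ων ν).indicator ⇑f)
    -- `χY` is multiplication by the characteristic function of `Y`
    (χY : L2Sp Ω →L[ℝ] L2Sp Ω)
    (hχY : ∀ f : L2Sp Ω, ⇑(χY f) =ᵐ[volume.restrict Ω] Y.indicator ⇑f)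
    -- `XI` is componentwise multiplication by the characteristic function of `I^ν`
    (XI : USp N Ω →L[ℝ] USp N Ω)
    (hXI : ∀ (w : USp N Ω) ν, ⇑(XI w ν) =ᵐ[volume.restrict Ω] (Iν ν).indicator ⇑(w ν))
    -- `M` is the operator `(M w)^ν = S_ν*(χ_ν S w + ρ χ_Y S w)` with `S w = Σ_ν S_ν w^ν`
    (M : USp N Ω → USp N Ω)
    (hM : ∀ (w : USp N Ω) ν,
      M w ν = ContinuousLinearMap.adjoint (S ν)
        (χ ν (∑ j, S j (w j)) + ρ • χY (∑ j, S j (w j)))) :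
    (∀ w : USp N Ω,
      ⟪w + α⁻¹ • XI (M (XI w)), w⟫ ≥
        (1 - (1 / (4 * α)) * ∑ ν, ‖χZ ∘L (S ν - χ ν ∘L S ν)‖ ^ 2) * ‖w‖ ^ 2) ∧
    (α > (1 / 4) * ∑ ν, ‖χZ ∘L (S ν - χ ν ∘L S ν)‖ ^ 2 →
      ∃ c > (0 : ℝ), ∀ w : USp N Ω,
        c * ‖w‖ ^ 2 ≤ ⟪w + α⁻¹ • XI (M (XI w)), w⟫) := by
  set C : ℝ := ∑ ν, ‖χZ ∘L (S ν - χ ν ∘L S ν)‖ ^ 2 with hC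
  have hC0 : 0 ≤ C := Finset.sum_nonneg fun ν _ => sq_nonneg _
  have main : ∀ w : USp N Ω,
      ⟪w + α⁻¹ • XI (M (XI w)), w⟫ ≥ (1 - (1 / (4 * α)) * C) * ‖w‖ ^ 2 := by
    intro w
    set v : USp N Ω := XI w with hv
    set g : L2Sp Ω := ∑ j, S j (v j) with hg
    set D : L2Sp Ω := ∑ ν, (S ν (v ν) - χ ν (S ν (v ν))) with hD
    -- ‖v‖ ≤ ‖w‖
    have hvw : ‖v‖ ≤ ‖w‖ := by
      have h1 : ⟪v, v⟫ = ⟪v, w⟫ := by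
        simp only [PiLp.inner_apply]
        exact Finset.sum_congr rfl fun ν _ =>
          ind_idem (Iν ν) (w ν) (w ν) (v ν) (v ν) (hXI w ν) (hXI w ν)
      have h2 : ⟪v, w⟫ ≤ ‖v‖ * ‖w‖ := real_inner_le_norm _ _
      rw [real_inner_self_eq_norm_sq] at h1
      nlinarith [norm_nonneg v, norm_nonneg w]
    -- the key lower bound on ⟪M v, v⟫
    have hMv : ⟪M v, v⟫ ≥ -(C / 4) * ‖v‖ ^ 2 := by
      have hsplit : ⟪M v, v⟫ =
          (∑ ν, ⟪χ ν g, S ν (v ν)⟫) + ρ * ⟪χY g, g⟫ := by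
        simp only [PiLp.inner_apply]
        have : ∀ ν : Fin N, ⟪M v ν, v ν⟫ =
            ⟪χ ν g, S ν (v ν)⟫ + ρ * ⟪χY g, S ν (v ν)⟫ := by
          intro ν
          rw [hM v ν, ContinuousLinearMap.adjoint_inner_left, inner_add_left,
            real_inner_smul_left]
        rw [Finset.sum_congr rfl fun ν _ => this ν, Finset.sum_add_distrib,
          ← Finset.mul_sum, ← inner_sum, ← hg]
      have hY0 : 0 ≤ ⟪χY g, g⟫ := by
        have := ind_idem Y g g (χY g) (χY g) (hχY g) (hχY g)
        rw [← this]
        exact real_inner_self_nonneg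
      -- first sum
      have hsum1 : ∑ ν, ⟪χ ν g, S ν (v ν)⟫ = ⟪χZ g, g⟫ - ⟪χZ g, D⟫ := by
        have h1 : ∀ ν : Fin N, ⟪χ ν g, S ν (v ν)⟫ = ⟪χZ g, χ ν (S ν (v ν))⟫ :=
          fun ν => ind_subset (Set.subset_iUnion Ων ν) g (S ν (v ν)) (χ ν g) (χZ g)
            (χ ν (S ν (v ν))) (hχ ν g) (hχZ g) (hχ ν (S ν (v ν)))
        rw [Finset.sum_congr rfl fun ν _ => h1 ν, ← inner_sum]
        have h2 : ∑ ν, χ ν (S ν (v ν)) = g - D := by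
          rw [hg, hD, Finset.sum_sub_distrib]
          abel
        rw [h2, inner_sub_right]
      have hZg : ⟪χZ g, g⟫ = ‖χZ g‖ ^ 2 := by
        rw [← real_inner_self_eq_norm_sq]
        exact (ind_idem (⋃ ν, Ων ν) g g (χZ g) (χZ g) (hχZ g) (hχZ g)).symm
      have hZD : ⟪χZ g, D⟫ ≤ ‖χZ g‖ * ‖χZ D‖ := by
        have := ind_idem (⋃ ν, Ων ν) g D (χZ g) (χZ D) (hχZ g) (hχZ D)
        rw [← this]
        exact real_inner_le_norm _ _
      have hDnorm : ‖χZ D‖ ^ 2 ≤ C * ‖v‖ ^ 2 := by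
        have h1 : χZ D = ∑ ν, (χZ ∘L (S ν - χ ν ∘L S ν)) (v ν) := by
          rw [hD, map_sum]
          rfl
        have h2 : ‖χZ D‖ ≤ ∑ ν, ‖χZ ∘L (S ν - χ ν ∘L S ν)‖ * ‖v ν‖ := by
          rw [h1]
          refine (norm_sum_le _ _).trans (Finset.sum_le_sum fun ν _ => ?_)
          exact ContinuousLinearMap.le_opNorm _ _
        have h3 : (∑ ν, ‖χZ ∘L (S ν - χ ν ∘L S ν)‖ * ‖v ν‖) ^ 2 ≤
            (∑ ν, ‖χZ ∘L (S ν - χ ν ∘L S ν)‖ ^ 2) * ∑ ν, ‖v ν‖ ^ 2 :=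
          Finset.sum_mul_sq_le_sq_mul_sq Finset.univ _ _
        have h4 : ∑ ν, ‖v ν‖ ^ 2 = ‖v‖ ^ 2 := (PiLp.norm_sq_eq_of_L2 _ v).symm
        have h5 : 0 ≤ ∑ ν, ‖χZ ∘L (S ν - χ ν ∘L S ν)‖ * ‖v ν‖ :=
          Finset.sum_nonneg fun ν _ => mul_nonneg (norm_nonneg _) (norm_nonneg _)
        calc ‖χZ D‖ ^ 2 ≤ (∑ ν, ‖χZ ∘L (S ν - χ ν ∘L S ν)‖ * ‖v ν‖) ^ 2 := by
              nlinarith [norm_nonneg (χZ D)]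
          _ ≤ C * ‖v‖ ^ 2 := by rw [← h4, hC]; exact h3
      rw [hsplit, hsum1, hZg]
      nlinarith [norm_nonneg (χZ g), norm_nonneg (χZ D), sq_nonneg (‖χZ g‖ - ‖χZ D‖ / 2),
        mul_nonneg hρ.le hY0]
    -- put everything together
    have hswap : ⟪XI (M v), w⟫ = ⟪M v, v⟫ := by
      simp only [PiLp.inner_apply, hv]
      exact Finset.sum_congr rfl fun ν _ =>
        ind_swap (Iν ν) (M (XI w) ν) (w ν) (XI (M (XI w)) ν) (XI w ν)
          (hXI (M (XI w)) ν) (hXI w ν)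
    have hexp : ⟪w + α⁻¹ • XI (M v), w⟫ = ‖w‖ ^ 2 + α⁻¹ * ⟪M v, v⟫ := by
      rw [inner_add_left, real_inner_smul_left, hswap, real_inner_self_eq_norm_sq]
    rw [hexp]
    have hv2 : ‖v‖ ^ 2 ≤ ‖w‖ ^ 2 := by nlinarith [norm_nonneg v, norm_nonneg w]
    have hαinv : 0 < α⁻¹ := inv_pos.mpr hα
    have : α⁻¹ * ⟪M v, v⟫ ≥ α⁻¹ * (-(C / 4) * ‖v‖ ^ 2) := by
      exact mul_le_mul_of_nonneg_left hMv hαinv.le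
    have h6 : α⁻¹ * (-(C / 4) * ‖v‖ ^ 2) ≥ α⁻¹ * (-(C / 4) * ‖w‖ ^ 2) := by
      have : -(C / 4) * ‖w‖ ^ 2 ≤ -(C / 4) * ‖v‖ ^ 2 := by nlinarith
      exact mul_le_mul_of_nonneg_left this hαinv.le
    have h7 : (1 : ℝ) / (4 * α) = α⁻¹ * (C / 4) / C ∨ True := Or.inr trivial
    have heq : (1 - 1 / (4 * α) * C) * ‖w‖ ^ 2 =
        ‖w‖ ^ 2 + α⁻¹ * (-(C / 4) * ‖w‖ ^ 2) := by
      field_simp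
      ring
    rw [heq]
    linarith
  refine ⟨main, fun hαC => ?_⟩
  refine ⟨1 - 1 / (4 * α) * C, ?_, fun w => main w⟩
  have h1 : 1 / (4 * α) * C < 1 := by
    rw [div_mul_eq_mul_div, one_mul, div_lt_one (by linarith)]
    linarith
  linarith
end
end
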